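/- Let Γ ∈ ℝ^{d×d} be symmetric positive definite, y ∈ ℝᵈ, a₁,…,a_N, b₁,…,b_N ∈ ℝᵈ. Suppose (1/N)∑_j exp(-(1/2)‖y - a_j‖²_{Γ⁻¹}) ≥ c and (1/N)∑_j exp(-(1/2)‖y - b_j‖²_{Γ⁻¹}) ≥ c for some c > 0. Then | log((1/N)∑_j exp(-(1/2)‖y-a_j‖²_{Γ⁻¹})) - log((1/N)∑_j exp(-(1/2)‖y-b_j‖²_{Γ⁻¹})) | ≤ (1/c) ‖Γ⁻¹‖ (2‖y‖ + max_j ‖a_j‖ + max_j ‖b_j‖) · max_j ‖a_j - b_j‖. -/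

import Mathlib

/-!
The map `x ↦ exp (-½ ⟪x, M x⟫)` is Lipschitz on bounded sets when the quadratic form of `M`
is nonnegative: `exp` is `1`-Lipschitz on `(-∞, 0]`, and
`⟪u, M u⟫ - ⟪v, M v⟫ = ⟪u - v, M u⟫ + ⟪v, M (u - v)⟫`.
Averaging over the samples preserves the bound, and `log` is `1/c`-Lipschitz on `[c, ∞)`.
-/

open scoped InnerProductSpace

namespace Real

lemma exp_sub_exp_le_abs_sub_of_nonpos {s t : ℝ} (hs : s ≤ 0) :
    exp s - exp t ≤ |s - t| :=
  calc exp s - exp t ≤ exp s * (s - t) := by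
        have := mul_le_mul_of_nonneg_left (add_one_le_exp (t - s)) (exp_nonneg s)
        rw [← exp_add, add_sub_cancel] at this
        linarith
    _ ≤ exp s * |s - t| := by gcongr; exact le_abs_self _
    _ ≤ |s - t| := mul_le_of_le_one_left (abs_nonneg _) (exp_le_one_iff.2 hs)

lemma abs_exp_sub_exp_le_of_nonpos {s t : ℝ} (hs : s ≤ 0) (ht : t ≤ 0) :
    |exp s - exp t| ≤ |s - t| :=
  abs_sub_le_iff.2
    ⟨exp_sub_exp_le_abs_sub_of_nonpos hs, abs_sub_comm s t ▸ exp_sub_exp_le_abs_sub_of_nonpos ht⟩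

lemma log_sub_log_le_abs_sub_div {A B c : ℝ} (hc : 0 < c) (hA : 0 < A) (hB : c ≤ B) :
    log A - log B ≤ |A - B| / c := by
  have hB₀ : 0 < B := hc.trans_le hB
  calc log A - log B = log (A / B) := (log_div hA.ne' hB₀.ne').symm
    _ ≤ A / B - 1 := log_le_sub_one_of_pos (div_pos hA hB₀)
    _ = (A - B) / B := by field_simp
    _ ≤ |A - B| / B := by gcongr; exact le_abs_self _
    _ ≤ |A - B| / c := div_le_div_of_nonneg_left (abs_nonneg _) hc hB

lemma abs_log_sub_log_le_abs_sub_div {A B c : ℝ} (hc : 0 < c) (hA : c ≤ A) (hB : c ≤ B) :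
    |log A - log B| ≤ |A - B| / c :=
  abs_sub_le_iff.2 ⟨log_sub_log_le_abs_sub_div hc (hc.trans_le hA) hB,
    abs_sub_comm A B ▸ log_sub_log_le_abs_sub_div hc (hc.trans_le hB) hA⟩

end Real

lemma abs_inner_map_self_sub_inner_map_self_le {E : Type*} [NormedAddCommGroup E]
    [InnerProductSpace ℝ E] (M : E →L[ℝ] E) (u v : E) :
    |⟪u, M u⟫_ℝ - ⟪v, M v⟫_ℝ| ≤ ‖M‖ * (‖u‖ + ‖v‖) * ‖u - v‖ := by
  have hsplit : ⟪u, M u⟫_ℝ - ⟪v, M v⟫_ℝ = ⟪u - v, M u⟫_ℝ + ⟪v, M (u - v)⟫_ℝ := by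
    simp only [map_sub, inner_sub_left, inner_sub_right]
    ring
  rw [hsplit]
  calc |⟪u - v, M u⟫_ℝ + ⟪v, M (u - v)⟫_ℝ|
      ≤ ‖u - v‖ * ‖M u‖ + ‖v‖ * ‖M (u - v)‖ :=
        (abs_add_le _ _).trans (add_le_add (abs_real_inner_le_norm _ _) (abs_real_inner_le_norm _ _))
    _ ≤ ‖u - v‖ * (‖M‖ * ‖u‖) + ‖v‖ * (‖M‖ * ‖u - v‖) := by gcongr <;> exact M.le_opNorm _
    _ = ‖M‖ * (‖u‖ + ‖v‖) * ‖u - v‖ := by ring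

lemma abs_exp_neg_half_inner_map_self_sub_le {E : Type*} [NormedAddCommGroup E]
    [InnerProductSpace ℝ E] {M : E →L[ℝ] E} (hM : ∀ x, 0 ≤ ⟪x, M x⟫_ℝ) (u v : E) :
    |Real.exp (-(1 / 2) * ⟪u, M u⟫_ℝ) - Real.exp (-(1 / 2) * ⟪v, M v⟫_ℝ)| ≤
      ‖M‖ * (‖u‖ + ‖v‖) * ‖u - v‖ / 2 := by
  have hu := hM u
  have hv := hM v
  calc _ ≤ |-(1 / 2) * ⟪u, M u⟫_ℝ - -(1 / 2) * ⟪v, M v⟫_ℝ| :=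
        Real.abs_exp_sub_exp_le_of_nonpos (by linarith) (by linarith)
    _ = |⟪u, M u⟫_ℝ - ⟪v, M v⟫_ℝ| / 2 := by
        rw [← mul_sub, abs_mul, abs_neg, abs_of_pos one_half_pos]; ring
    _ ≤ _ := by gcongr; exact abs_inner_map_self_sub_inner_map_self_le M u v

lemma Matrix.PosSemidef.inner_toEuclideanCLM_self_nonneg {n : Type*} [Fintype n] [DecidableEq n]
    {A : Matrix n n ℝ} (hA : A.PosSemidef) (x : EuclideanSpace ℝ n) :
    0 ≤ ⟪x, Matrix.toEuclideanCLM (𝕜 := ℝ) A x⟫_ℝ :=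
  (Matrix.isPositive_toEuclideanLin_iff.2 hA).inner_nonneg_right x

lemma abs_mean_sub_mean_le {ι : Type*} [Fintype ι] {f g : ι → ℝ} {C : ℝ} (hC : 0 ≤ C)
    (h : ∀ i, |f i - g i| ≤ C) :
    |(1 / (Fintype.card ι : ℝ)) * ∑ i, f i - (1 / (Fintype.card ι : ℝ)) * ∑ i, g i| ≤ C := by
  set n : ℝ := (Fintype.card ι : ℝ)
  calc _ = 1 / n * |∑ i, (f i - g i)| := by
        rw [← mul_sub, ← Finset.sum_sub_distrib, abs_mul, abs_of_nonneg (by positivity)]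
    _ ≤ 1 / n * (n * C) := by
        gcongr
        refine (Finset.abs_sum_le_sum_abs _ _).trans ?_
        simpa [n] using Finset.sum_le_sum fun i (_ : i ∈ Finset.univ) => h i
    _ = n / n * C := by ring
    _ ≤ C := mul_le_of_le_one_left hC (div_self_le_one n)

theorem log_evidence_error_bound_general (d N : ℕ)
    (Γ : Matrix (Fin d) (Fin d) ℝ) (hΓpd : Γ.PosDef)
    (y : EuclideanSpace ℝ (Fin d)) (a b : Fin N → EuclideanSpace ℝ (Fin d))
    (c : ℝ) (hc : 0 < c)
    (ha : c ≤ (1 / (N : ℝ)) * ∑ j, Real.exp (-(1 / 2) *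
        ⟪y - a j, Matrix.toEuclideanCLM (𝕜 := ℝ) Γ⁻¹ (y - a j)⟫_ℝ))
    (hb : c ≤ (1 / (N : ℝ)) * ∑ j, Real.exp (-(1 / 2) *
        ⟪y - b j, Matrix.toEuclideanCLM (𝕜 := ℝ) Γ⁻¹ (y - b j)⟫_ℝ)) :
    |Real.log ((1 / (N : ℝ)) * ∑ j, Real.exp (-(1 / 2) *
        ⟪y - a j, Matrix.toEuclideanCLM (𝕜 := ℝ) Γ⁻¹ (y - a j)⟫_ℝ)) -
      Real.log ((1 / (N : ℝ)) * ∑ j, Real.exp (-(1 / 2) *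
        ⟪y - b j, Matrix.toEuclideanCLM (𝕜 := ℝ) Γ⁻¹ (y - b j)⟫_ℝ))| ≤
    (1 / c) * ‖Matrix.toEuclideanCLM (𝕜 := ℝ) Γ⁻¹‖ *
      (2 * ‖y‖ + (⨆ j, ‖a j‖) + (⨆ j, ‖b j‖)) * (⨆ j, ‖a j - b j‖) := by
  set M := Matrix.toEuclideanCLM (𝕜 := ℝ) Γ⁻¹
  set K := 2 * ‖y‖ + (⨆ j, ‖a j‖) + (⨆ j, ‖b j‖)
  set S := ⨆ j, ‖a j - b j‖
  have hK₀ : 0 ≤ K := by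
    have := Real.iSup_nonneg fun j => norm_nonneg (a j)
    have := Real.iSup_nonneg fun j => norm_nonneg (b j)
    positivity
  have hS₀ : 0 ≤ S := Real.iSup_nonneg fun j => norm_nonneg (a j - b j)
  have hsup (f : Fin N → ℝ) (j : Fin N) : f j ≤ ⨆ j, f j := le_ciSup (Finite.bddAbove_range f) j
  have hK : ∀ j, ‖y - a j‖ + ‖y - b j‖ ≤ K := fun j => by
    linarith [norm_sub_le y (a j), norm_sub_le y (b j), hsup (‖a ·‖) j, hsup (‖b ·‖) j]
  have hS : ∀ j, ‖(y - a j) - (y - b j)‖ ≤ S := fun j => by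
    rw [sub_sub_sub_cancel_left, norm_sub_rev]; exact hsup (fun i => ‖a i - b i‖) j
  have hterm : ∀ j, |Real.exp (-(1 / 2) * ⟪y - a j, M (y - a j)⟫_ℝ) -
      Real.exp (-(1 / 2) * ⟪y - b j, M (y - b j)⟫_ℝ)| ≤ ‖M‖ * K * S := fun j =>
    calc _ ≤ ‖M‖ * (‖y - a j‖ + ‖y - b j‖) * ‖(y - a j) - (y - b j)‖ / 2 :=
          abs_exp_neg_half_inner_map_self_sub_le
            hΓpd.inv.posSemidef.inner_toEuclideanCLM_self_nonneg _ _
      _ ≤ ‖M‖ * (‖y - a j‖ + ‖y - b j‖) * ‖(y - a j) - (y - b j)‖ := half_le_self (by positivity)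
      _ ≤ ‖M‖ * K * S := by gcongr <;> [exact hK j; exact hS j]
  have hmean := abs_mean_sub_mean_le (by positivity) hterm
  rw [Fintype.card_fin] at hmean
  calc _ ≤ |_ - _| / c := Real.abs_log_sub_log_le_abs_sub_div hc ha hb
    _ ≤ ‖M‖ * K * S / c := by gcongr
    _ = _ := by ring

theorem log_evidence_error_bound (d N : ℕ) (hN : 0 < N)
    (Γ : Matrix (Fin d) (Fin d) ℝ) (hΓsymm : Γ.IsSymm) (hΓpd : Γ.PosDef)
    (y : EuclideanSpace ℝ (Fin d)) (a b : Fin N → EuclideanSpace ℝ (Fin d))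
    (c : ℝ) (hc : 0 < c)
    (ha : c ≤ (1 / (N : ℝ)) * ∑ j, Real.exp (-(1 / 2) *
        ⟪y - a j, Matrix.toEuclideanCLM (𝕜 := ℝ) Γ⁻¹ (y - a j)⟫_ℝ))
    (hb : c ≤ (1 / (N : ℝ)) * ∑ j, Real.exp (-(1 / 2) *
        ⟪y - b j, Matrix.toEuclideanCLM (𝕜 := ℝ) Γ⁻¹ (y - b j)⟫_ℝ)) :
    |Real.log ((1 / (N : ℝ)) * ∑ j, Real.exp (-(1 / 2) *
        ⟪y - a j, Matrix.toEuclideanCLM (𝕜 := ℝ) Γ⁻¹ (y - a j)⟫_ℝ)) -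
      Real.log ((1 / (N : ℝ)) * ∑ j, Real.exp (-(1 / 2) *
        ⟪y - b j, Matrix.toEuclideanCLM (𝕜 := ℝ) Γ⁻¹ (y - b j)⟫_ℝ))| ≤
    (1 / c) * ‖Matrix.toEuclideanCLM (𝕜 := ℝ) Γ⁻¹‖ *
      (2 * ‖y‖ + (⨆ j, ‖a j‖) + (⨆ j, ‖b j‖)) * (⨆ j, ‖a j - b j‖) :=
  log_evidence_error_bound_general d N Γ hΓpd y a b c hc ha hb
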